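/- (Generalized Kac lemma.) Let μ be a finite P-invariant borelian measure on 𝐗 and let τ be a θ-compatible stopping time such that for μ-almost every x ∈ 𝐗, ℙ_x(τ ≥ n) → 0 as n → ∞. Then for every nonnegative borelian function f on 𝐗, ∫_𝐗 f dμ = ∫_𝐗 SRf dμ. -/

import Mathlib

open MeasureTheory Filter Set Topology
open scoped ENNReal NNReal ENat

noncomputable section

/-- The shift on path space. -/
def pshift {X : Type*} (ω : ℕ → X) : ℕ → X := fun n => ω (n + 1)

/-- The natural filtration on path space: the σ-algebra generated by the first `n+1`
coordinates. -/
def pathFiltration (X : Type*) [MeasurableSpace X] (n : ℕ) : MeasurableSpace (ℕ → X) :=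
  MeasurableSpace.comap (fun ω (i : Fin (n + 1)) => ω (i : ℕ)) inferInstance

/-- A Markov chain on `X`, given by the family of its path-space laws `ℙ_x`. -/
structure MarkovChain (X : Type*) [MeasurableSpace X] where
  law : X → Measure (ℕ → X)
  prob : ∀ x, IsProbabilityMeasure (law x)
  meas_law : Measurable law
  start : ∀ x, (law x).map (fun ω => ω 0) = Measure.dirac x
  markov : ∀ (x : X) (n : ℕ) (A : Set (ℕ → X)),
      MeasurableSet[pathFiltration X n] A → ∀ g : (ℕ → X) → ℝ≥0∞, Measurable g →
      ∫⁻ ω in A, g (fun k => ω (k + n)) ∂law x = ∫⁻ ω in A, ∫⁻ η, g η ∂law (ω n) ∂law x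

variable {X : Type*} [MeasurableSpace X]

/-- A stopping time on path space, with values in `ℕ∞`. -/
def IsPathStoppingTime (τ : (ℕ → X) → ℕ∞) : Prop :=
  ∀ n : ℕ, MeasurableSet[pathFiltration X n] {ω | τ ω = (n : ℕ∞)}

/-- `τ` is θ-compatible: `ℙ_x(τ = 0) = 0` and, almost everywhere, `τ ≥ 2` implies
`τ ∘ θ = τ - 1`. -/
def ThetaCompatible (M : MarkovChain X) (τ : (ℕ → X) → ℕ∞) : Prop :=
  (∀ x, M.law x {ω | τ ω = 0} = 0) ∧
    ∀ x, ∀ᵐ ω ∂M.law x, 2 ≤ τ ω → τ (pshift ω) = τ ω - 1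

/-- The Markov operator `P` on nonnegative functions: `Pf(x) = 𝔼_x f(X_1)`. -/
def Pop (M : MarkovChain X) (f : X → ℝ≥0∞) (x : X) : ℝ≥0∞ := ∫⁻ ω, f (ω 1) ∂M.law x

/-- The induced operator `Q`: `Qg(x) = ∫_{τ<∞} g(X_τ) dℙ_x`. -/
def Qop (M : MarkovChain X) (τ : (ℕ → X) → ℕ∞) (g : X → ℝ≥0∞) (x : X) : ℝ≥0∞ :=
  ∫⁻ ω in {ω | τ ω ≠ ⊤}, g (ω (τ ω).toNat) ∂M.law x

/-- The operator `S`: `Sf(x) = ∫_{τ=1} f(X_1) dℙ_x`. -/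
def Sop (M : MarkovChain X) (τ : (ℕ → X) → ℕ∞) (f : X → ℝ≥0∞) (x : X) : ℝ≥0∞ :=
  ∫⁻ ω in {ω | τ ω = 1}, f (ω 1) ∂M.law x

/-- The operator `R`: `Rf(x) = ∫_{τ<∞} (f(X_0) + ⋯ + f(X_{τ-1})) dℙ_x`. -/
def Rop (M : MarkovChain X) (τ : (ℕ → X) → ℕ∞) (f : X → ℝ≥0∞) (x : X) : ℝ≥0∞ :=
  ∫⁻ ω in {ω | τ ω ≠ ⊤}, ∑ k ∈ Finset.range (τ ω).toNat, f (ω k) ∂M.law x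

/-- `𝔼_x τ`, with values in `[0,∞]`. -/
def EtauE (M : MarkovChain X) (τ : (ℕ → X) → ℕ∞) (x : X) : ℝ≥0∞ :=
  ∫⁻ ω, (τ ω : ℝ≥0∞) ∂M.law x

/-- `μ` is `P`-invariant: `∫ Pf dμ = ∫ f dμ` for every bounded nonnegative borelian `f`. -/
def PInvariant (M : MarkovChain X) (μ : Measure X) : Prop :=
  ∀ f : X → ℝ≥0∞, Measurable f → (∃ C : ℝ≥0∞, C ≠ ⊤ ∧ ∀ x, f x ≤ C) →
    ∫⁻ x, Pop M f x ∂μ = ∫⁻ x, f x ∂μ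

/-- `ν` is `Q`-invariant: `∫ Qf dν = ∫ f dν` for every bounded nonnegative borelian `f`. -/
def QInvariant (M : MarkovChain X) (τ : (ℕ → X) → ℕ∞) (ν : Measure X) : Prop :=
  ∀ f : X → ℝ≥0∞, Measurable f → (∃ C : ℝ≥0∞, C ≠ ⊤ ∧ ∀ x, f x ≤ C) →
    ∫⁻ x, Qop M τ f x ∂ν = ∫⁻ x, f x ∂ν

/-- `ν = S*μ`, i.e. `ν(A) = ∫ S𝟙_A dμ` for every borelian `A`. -/
def SstarEq (M : MarkovChain X) (τ : (ℕ → X) → ℕ∞) (μ ν : Measure X) : Prop :=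
  ∀ A : Set X, MeasurableSet A → ν A = ∫⁻ x, Sop M τ (A.indicator 1) x ∂μ

/-- `m = R*ν`, i.e. `m(A) = ∫ R𝟙_A dν` for every borelian `A`. -/
def RstarEq (M : MarkovChain X) (τ : (ℕ → X) → ℕ∞) (ν m : Measure X) : Prop :=
  ∀ A : Set X, MeasurableSet A → m A = ∫⁻ x, Rop M τ (A.indicator 1) x ∂ν

/-- the real-valued Markov operator -/
def Pr (M : MarkovChain X) (f : X → ℝ) (x : X) : ℝ := ∫ ω, f (ω 1) ∂M.law x

/-- the real-valued induced operator -/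
def Qr (M : MarkovChain X) (τ : (ℕ → X) → ℕ∞) (g : X → ℝ) (x : X) : ℝ :=
  ∫ ω in {ω | τ ω ≠ ⊤}, g (ω (τ ω).toNat) ∂M.law x

/-- the real-valued operator `S` -/
def Sr (M : MarkovChain X) (τ : (ℕ → X) → ℕ∞) (f : X → ℝ) (x : X) : ℝ :=
  ∫ ω in {ω | τ ω = 1}, f (ω 1) ∂M.law x

/-- the real-valued operator `R` -/
def Rr (M : MarkovChain X) (τ : (ℕ → X) → ℕ∞) (f : X → ℝ) (x : X) : ℝ :=
  ∫ ω in {ω | τ ω ≠ ⊤}, ∑ k ∈ Finset.range (τ ω).toNat, f (ω k) ∂M.law x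

/-- `𝔼_x τ` as a real number. -/
def Etau (M : MarkovChain X) (τ : (ℕ → X) → ℕ∞) (x : X) : ℝ := (EtauE M τ x).toReal

/-- `B_u = sup (Pu - u) + 1`. -/
def Bu (M : MarkovChain X) (u : X → ℝ) : ℝ :=
  sSup (Set.range fun x => Pr M u x - u x) + 1

/-- the weight `u - Pu + B_u` defining the space `𝓔_u`. -/
def wE (M : MarkovChain X) (u : X → ℝ) : X → ℝ := fun x => u x - Pr M u x + Bu M u

/-- `u` is a drift function: `u ≥ 1`, `u - Pu` is bounded below and, with
`B_u = sup (Pu - u) + 1`, the functions `Qu`, `𝔼τ/u` and `P(u-Pu+B_u)/(u-Pu+B_u)` are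
bounded. -/
structure IsDrift (M : MarkovChain X) (τ : (ℕ → X) → ℕ∞) (u : X → ℝ) : Prop where
  meas : Measurable u
  one_le : ∀ x, 1 ≤ u x
  int_one : ∀ x, Integrable (fun ω => u (ω 1)) (M.law x)
  bdd : BddAbove (Set.range fun x => Pr M u x - u x)
  etau_ne_top : ∀ x, EtauE M τ x ≠ ⊤
  qu_bdd : ∃ C : ℝ, ∀ x, Qr M τ u x ≤ C
  etau_div_bdd : ∃ C : ℝ, ∀ x, Etau M τ x ≤ C * u x
  pw_bdd : ∃ C : ℝ, ∀ x, Pr M (wE M u) x ≤ C * wE M u x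

/-- membership in the weighted space `𝓕^p_v` : `f` is borelian and `|f| ≤ C v^{1/p}`. -/
def MemWp (v : X → ℝ) (p : ℝ) (f : X → ℝ) : Prop :=
  Measurable f ∧ ∃ C : ℝ, ∀ x, |f x| ≤ C * v x ^ (1 / p)

/-- the norm of the weighted space `𝓕^p_v` : `‖f‖ = sup_x |f(x)|/v(x)^{1/p}`. -/
def normWp (v : X → ℝ) (p : ℝ) (f : X → ℝ) : ℝ := ⨆ x, |f x| / v x ^ (1 / p)

/-- ergodicity among a class of invariant measures: a finite nonzero invariant measure is
ergodic if it is not a nontrivial convex combination of two distinct invariant probability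
measures. -/
def ErgodicAmong (Inv : Measure X → Prop) (μ : Measure X) : Prop :=
  μ ≠ 0 ∧ ∀ (ν₁ ν₂ : Measure X) (t : ℝ≥0∞), Inv ν₁ → Inv ν₂ →
    IsProbabilityMeasure ν₁ → IsProbabilityMeasure ν₂ → 0 < t → t < 1 →
    μ = μ Set.univ • (t • ν₁ + (1 - t) • ν₂) → ν₁ = ν₂

/-! For bounded `f`, let `R_N f(x) = 𝔼_x[f(X_0) + ⋯ + f(X_{min(N,τ)-1}); τ < ∞]`. θ-compatibility
and the Markov property at time 1 give `R_{N+1} f = f · ℙ(τ < ∞) + ∫_{τ ≥ 2} R_N f(X_1)`, while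
`Pg = Sg + ∫_{τ ≥ 2} g(X_1)`. Integrating against `μ`, `P`-invariance applied to the bounded
function `R_N f` cancels the common term and leaves
`∫ f dμ = ∫ S R_N f dμ + ∫ 𝔼_x[f(X_N); N < τ < ∞] dμ(x)`. The last term is at most
`sup f · ∫ ℙ_x(τ ≥ N) dμ(x) → 0`, and `S R_N f ↑ S R f`; truncating `f` then gives the general case
by monotone convergence. -/

lemma pathFiltration_le (n : ℕ) : pathFiltration X n ≤ (inferInstance : MeasurableSpace (ℕ → X)) :=
  (measurable_pi_lambda _ fun _ => measurable_pi_apply _).comap_le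

lemma pathFiltration_mono : Monotone (pathFiltration X) := fun m n hmn => by
  have hfactor : (fun (ω : ℕ → X) (i : Fin (m + 1)) => ω (i : ℕ)) =
      (fun v (i : Fin (m + 1)) => v (Fin.castLE (by omega) i)) ∘
        fun (ω : ℕ → X) (i : Fin (n + 1)) => ω (i : ℕ) := rfl
  rw [pathFiltration, pathFiltration, hfactor, ← MeasurableSpace.comap_comp]
  exact MeasurableSpace.comap_mono (measurable_pi_lambda _ fun _ => measurable_pi_apply _).comap_le

lemma ENat.two_le_iff_ne_zero_and_ne_one (t : ℕ∞) : 2 ≤ t ↔ t ≠ 0 ∧ t ≠ 1 := by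
  induction t using ENat.recTopCoe <;> simp; omega

namespace IsPathStoppingTime

variable {τ : (ℕ → X) → ℕ∞}

protected lemma measurable (hst : IsPathStoppingTime τ) : Measurable τ := by
  refine measurable_to_countable' fun t => ?_
  induction t using ENat.recTopCoe with
  | coe n => exact pathFiltration_le n _ (hst n)
  | top =>
    have htop : τ ⁻¹' {⊤} = (⋃ n : ℕ, τ ⁻¹' {(n : ℕ∞)})ᶜ := by
      ext ω
      simp [ENat.eq_top_iff_forall_ne, eq_comm]
    rw [htop]
    exact (MeasurableSet.iUnion fun n => pathFiltration_le n _ (hst n)).compl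

lemma measurableSet_preimage (hst : IsPathStoppingTime τ) (s : Set ℕ∞) :
    MeasurableSet (τ ⁻¹' s) :=
  hst.measurable MeasurableSet.of_discrete

lemma measurableSet_two_le (hst : IsPathStoppingTime τ) :
    MeasurableSet[pathFiltration X 1] {ω | 2 ≤ τ ω} := by
  have h0 : MeasurableSet[pathFiltration X 1] {ω | τ ω = 0} :=
    pathFiltration_mono zero_le_one _ (hst 0)
  have h1 : MeasurableSet[pathFiltration X 1] {ω | τ ω = 1} := hst 1
  simp_rw [ENat.two_le_iff_ne_zero_and_ne_one, ofPred_and]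
  exact h0.compl.inter h1.compl

end IsPathStoppingTime

namespace MarkovChain

variable (M : MarkovChain X) {τ : (ℕ → X) → ℕ∞}

instance (x : X) : IsProbabilityMeasure (M.law x) := M.prob x

lemma ae_comp_start_eq {β : Type*} [MeasurableSpace β] [MeasurableSingletonClass β] {g : X → β}
    (hg : Measurable g) (x : X) : ∀ᵐ ω ∂M.law x, g (ω 0) = g x := by
  have hset : MeasurableSet {y | g y = g x} := hg (measurableSet_singleton _)
  rw [← ae_map_iff (f := fun ω : ℕ → X => ω 0) (measurable_pi_apply 0).aemeasurable hset, M.start x,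
    ae_dirac_iff hset]

lemma measurable_setLIntegral {g : (ℕ → X) → ℝ≥0∞} (hg : Measurable g) {s : Set (ℕ → X)}
    (hs : MeasurableSet s) : Measurable fun x => ∫⁻ ω in s, g ω ∂M.law x := by
  simp_rw [← lintegral_indicator hs]
  exact (Measure.measurable_lintegral (hg.indicator hs)).comp M.meas_law

lemma law_ne_top_eq_one (hst : IsPathStoppingTime τ) {x : X}
    (htail : Tendsto (fun n : ℕ => M.law x {ω | (n : ℕ∞) ≤ τ ω}) atTop (𝓝 0)) :
    M.law x {ω | τ ω ≠ ⊤} = 1 := by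
  have htop : M.law x (τ ⁻¹' {⊤}) = 0 :=
    le_antisymm (ge_of_tendsto' htail fun n => measure_mono fun ω (hω : τ ω = ⊤) => by
      simp [hω]) zero_le
  exact (prob_compl_eq_one_iff (hst.measurableSet_preimage {⊤})).2 htop

lemma tendsto_lintegral_law_le (hst : IsPathStoppingTime τ) {μ : Measure X} [IsFiniteMeasure μ]
    (htail : ∀ᵐ x ∂μ, Tendsto (fun n : ℕ => M.law x {ω | (n : ℕ∞) ≤ τ ω}) atTop (𝓝 0)) :
    Tendsto (fun n : ℕ => ∫⁻ x, M.law x {ω | (n : ℕ∞) ≤ τ ω} ∂μ) atTop (𝓝 0) := by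
  simpa only [lintegral_zero] using tendsto_lintegral_of_dominated_convergence
    (F := fun n x => M.law x {ω | (n : ℕ∞) ≤ τ ω}) (fun _ => 1)
    (fun n => (Measure.measurable_coe (hst.measurableSet_preimage (Ici n))).comp M.meas_law)
    (fun _ => ae_of_all _ fun _ => prob_le_one) (by simp) htail

end MarkovChain

section Operators

variable (M : MarkovChain X) {τ : (ℕ → X) → ℕ∞}

lemma Pop_eq_Sop_add (hst : IsPathStoppingTime τ) {x : X} (h0 : M.law x {ω | τ ω = 0} = 0)
    (g : X → ℝ≥0∞) :
    Pop M g x = Sop M τ g x + ∫⁻ ω in {ω | 2 ≤ τ ω}, g (ω 1) ∂M.law x := by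
  have hcompl : {ω | τ ω = 1}ᶜ =ᵐ[M.law x] {ω | 2 ≤ τ ω} := by
    filter_upwards [measure_eq_zero_iff_ae_notMem.1 h0] with ω (hω : τ ω ≠ 0)
    change (τ ω ≠ 1) = (2 ≤ τ ω)
    simp [ENat.two_le_iff_ne_zero_and_ne_one, hω]
  rw [Pop, ← lintegral_add_compl (A := {ω | τ ω = 1}) _ (hst.measurableSet_preimage {1})]
  exact congrArg _ (setLIntegral_congr hcompl)

lemma Sop_mono : Monotone (Sop M τ) := fun _ _ hgh _ =>
  lintegral_mono fun ω => hgh (ω 1)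

lemma measurable_Sop (hst : IsPathStoppingTime τ) {g : X → ℝ≥0∞} (hg : Measurable g) :
    Measurable (Sop M τ g) :=
  M.measurable_setLIntegral (hg.comp (measurable_pi_apply 1)) (hst.measurableSet_preimage {1})

lemma Sop_iSup {g : ℕ → X → ℝ≥0∞} (hg : ∀ n, Measurable (g n)) (hmono : Monotone g) (x : X) :
    Sop M τ (fun y => ⨆ n, g n y) x = ⨆ n, Sop M τ (g n) x :=
  lintegral_iSup (fun n => (hg n).comp (measurable_pi_apply 1)) fun _ _ h ω => hmono h (ω 1)

end Operators

/-- `stoppedSum τ N f ω = f(ω 0) + ⋯ + f(ω (min N (τ ω) - 1))` if `τ ω < ∞`, and `0` otherwise. -/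
def stoppedSum {α : Type*} (τ : (ℕ → α) → ℕ∞) (N : ℕ) (f : α → ℝ≥0∞) (ω : ℕ → α) : ℝ≥0∞ :=
  ∑ k ∈ Finset.range N, (τ ⁻¹' Ioo (k : ℕ∞) ⊤).indicator (fun ω => f (ω k)) ω

lemma measurable_stoppedSum {τ : (ℕ → X) → ℕ∞} {f : X → ℝ≥0∞} (hτ : Measurable τ)
    (hf : Measurable f) (N : ℕ) : Measurable (stoppedSum τ N f) :=
  Finset.measurable_sum _ fun k _ =>
    (hf.comp (measurable_pi_apply k)).indicator (hτ MeasurableSet.of_discrete)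

section StoppedSum

variable {α : Type*} {τ : (ℕ → α) → ℕ∞} {f : α → ℝ≥0∞}

lemma stoppedSum_mono_left (f : α → ℝ≥0∞) (ω : ℕ → α) : Monotone fun N => stoppedSum τ N f ω :=
  fun _ _ h => Finset.sum_le_sum_of_subset (Finset.range_subset_range.2 h)

lemma stoppedSum_mono_right (N : ℕ) : Monotone (stoppedSum τ N) := fun _ _ h _ =>
  Finset.sum_le_sum fun _ _ => indicator_le_indicator (h _)

lemma stoppedSum_succ (N : ℕ) (f : α → ℝ≥0∞) (ω : ℕ → α) :
    stoppedSum τ (N + 1) f ω =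
      stoppedSum τ N f ω + (τ ⁻¹' Ioo (N : ℕ∞) ⊤).indicator (fun ω => f (ω N)) ω :=
  Finset.sum_range_succ _ _

lemma stoppedSum_le {C : ℝ≥0∞} (hfC : ∀ y, f y ≤ C) (N : ℕ) (ω : ℕ → α) :
    stoppedSum τ N f ω ≤ N * C :=
  calc stoppedSum τ N f ω ≤ ∑ _ ∈ Finset.range N, C :=
        Finset.sum_le_sum fun _ _ => indicator_le (fun _ _ => hfC _) ω
    _ = N * C := by simp

lemma stoppedSum_of_eq_coe {ω : ℕ → α} {m : ℕ} (hm : τ ω = m) (N : ℕ) (f : α → ℝ≥0∞) :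
    stoppedSum τ N f ω = ∑ k ∈ Finset.range (min N m), f (ω k) := by
  simp only [stoppedSum, indicator, mem_preimage, hm, mem_Ioo, Nat.cast_lt, ENat.natCast_lt_top,
    and_true]
  rw [← Finset.sum_filter]
  congr 1
  ext k
  simp only [Finset.mem_filter, Finset.mem_range]
  omega

lemma iSup_stoppedSum (f : α → ℝ≥0∞) (ω : ℕ → α) :
    ⨆ N, stoppedSum τ N f ω =
      {ω | τ ω ≠ ⊤}.indicator (fun ω => ∑ k ∈ Finset.range (τ ω).toNat, f (ω k)) ω := by
  induction h : τ ω using ENat.recTopCoe with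
  | top => simp [stoppedSum, h]
  | coe m =>
    rw [indicator_of_mem (by simp [h]), h, ENat.toNat_natCast]
    simp only [stoppedSum_of_eq_coe h]
    exact le_antisymm
      (iSup_le fun _ =>
        Finset.sum_le_sum_of_subset (Finset.range_subset_range.2 (min_le_right _ _)))
      (le_iSup_of_le m (by simp))

lemma stoppedSum_iSup {f : ℕ → α → ℝ≥0∞} (hmono : Monotone f) (N : ℕ) (ω : ℕ → α) :
    stoppedSum τ N (fun y => ⨆ n, f n y) ω = ⨆ n, stoppedSum τ N (f n) ω := by
  refine (Finset.sum_congr rfl fun k _ => ?_).trans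
    (ENNReal.finsetSum_iSup_of_monotone fun k _ _ h => indicator_le_indicator (hmono h _))
  by_cases hk : ω ∈ τ ⁻¹' Ioo (k : ℕ∞) ⊤ <;> simp [hk]

lemma stoppedSum_succ_eq_shift {ω : ℕ → α} (h0 : τ ω ≠ 0)
    (hθ : 2 ≤ τ ω → τ (pshift ω) = τ ω - 1) (N : ℕ) (f : α → ℝ≥0∞) :
    stoppedSum τ (N + 1) f ω =
      {ω | τ ω ≠ ⊤}.indicator (fun ω => f (ω 0)) ω
        + {ω | 2 ≤ τ ω}.indicator (stoppedSum τ N f ∘ pshift) ω := by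
  rw [stoppedSum, Finset.sum_range_succ', add_comm]
  congr 1
  · simp [indicator, pos_iff_ne_zero, h0, lt_top_iff_ne_top]
  · by_cases h2 : 2 ≤ τ ω
    · rw [indicator_of_mem (show ω ∈ {ω | 2 ≤ τ ω} from h2)]
      refine Finset.sum_congr rfl fun k _ => ?_
      simp [indicator, hθ h2, lt_tsub_iff_right, lt_top_iff_ne_top, pshift]
    · rw [indicator_of_notMem (show ω ∉ {ω | 2 ≤ τ ω} from h2)]
      refine Finset.sum_eq_zero fun k _ => indicator_of_notMem (fun hk => h2 ?_) _
      have h1 : (1 : ℕ∞) < τ ω := lt_of_le_of_lt (by exact_mod_cast Nat.le_add_left 1 k) hk.1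
      exact Order.add_one_le_of_lt h1

end StoppedSum

def RopTrunc (M : MarkovChain X) (τ : (ℕ → X) → ℕ∞) (N : ℕ) (f : X → ℝ≥0∞) (x : X) : ℝ≥0∞ :=
  ∫⁻ ω, stoppedSum τ N f ω ∂M.law x

section RopTrunc

variable (M : MarkovChain X) {τ : (ℕ → X) → ℕ∞} {f : X → ℝ≥0∞}

lemma measurable_RopTrunc (hst : IsPathStoppingTime τ) (hf : Measurable f) (N : ℕ) :
    Measurable (RopTrunc M τ N f) :=
  (Measure.measurable_lintegral (measurable_stoppedSum hst.measurable hf N)).comp M.meas_law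

lemma RopTrunc_mono_left (f : X → ℝ≥0∞) (x : X) : Monotone fun N => RopTrunc M τ N f x :=
  fun _ _ h => lintegral_mono fun ω => stoppedSum_mono_left f ω h

lemma RopTrunc_le {C : ℝ≥0∞} (hfC : ∀ y, f y ≤ C) (N : ℕ) (x : X) : RopTrunc M τ N f x ≤ N * C :=
  calc RopTrunc M τ N f x ≤ ∫⁻ _, (N : ℝ≥0∞) * C ∂M.law x :=
        lintegral_mono fun ω => stoppedSum_le hfC N ω
    _ = N * C := by simp

lemma RopTrunc_succ (hst : IsPathStoppingTime τ) (hf : Measurable f) (N : ℕ) (x : X) :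
    RopTrunc M τ (N + 1) f x = RopTrunc M τ N f x
      + ∫⁻ ω, (τ ⁻¹' Ioo (N : ℕ∞) ⊤).indicator (fun ω => f (ω N)) ω ∂M.law x := by
  simp_rw [RopTrunc, stoppedSum_succ]
  exact lintegral_add_left (measurable_stoppedSum hst.measurable hf N) _

lemma RopTrunc_succ_eq_shift (hst : IsPathStoppingTime τ) (hθ : ThetaCompatible M τ)
    (hf : Measurable f) (N : ℕ) (x : X) :
    RopTrunc M τ (N + 1) f x = f x * M.law x {ω | τ ω ≠ ⊤}
      + ∫⁻ ω in {ω | 2 ≤ τ ω}, RopTrunc M τ N f (ω 1) ∂M.law x := by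
  have hne : MeasurableSet {ω | τ ω ≠ ⊤} := hst.measurableSet_preimage {⊤}ᶜ
  have htwo : MeasurableSet {ω | 2 ≤ τ ω} := hst.measurableSet_preimage (Ici 2)
  have hsplit : stoppedSum τ (N + 1) f =ᵐ[M.law x] fun ω =>
      {ω | τ ω ≠ ⊤}.indicator (fun ω => f (ω 0)) ω
        + {ω | 2 ≤ τ ω}.indicator (stoppedSum τ N f ∘ pshift) ω := by
    filter_upwards [measure_eq_zero_iff_ae_notMem.1 (hθ.1 x), hθ.2 x] with ω h0 hθω
    exact stoppedSum_succ_eq_shift h0 hθω N f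
  have hstart : ∫⁻ ω in {ω | τ ω ≠ ⊤}, f (ω 0) ∂M.law x = f x * M.law x {ω | τ ω ≠ ⊤} := by
    rw [lintegral_congr_ae (ae_restrict_of_ae (M.ae_comp_start_eq hf x)), setLIntegral_const]
  rw [RopTrunc, lintegral_congr_ae hsplit,
    lintegral_add_left (f := {ω | τ ω ≠ ⊤}.indicator fun ω => f (ω 0))
      ((hf.comp (measurable_pi_apply 0)).indicator hne),
    lintegral_indicator hne, lintegral_indicator htwo, hstart]
  congr 1
  exact M.markov x 1 _ hst.measurableSet_two_le _ (measurable_stoppedSum hst.measurable hf N)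

lemma Rop_eq_iSup_RopTrunc (hst : IsPathStoppingTime τ) (hf : Measurable f) (x : X) :
    Rop M τ f x = ⨆ N, RopTrunc M τ N f x := by
  rw [Rop, ← lintegral_indicator (s := {ω | τ ω ≠ ⊤}) (hst.measurableSet_preimage {⊤}ᶜ)]
  simp_rw [← iSup_stoppedSum]
  exact lintegral_iSup (measurable_stoppedSum hst.measurable hf)
    fun _ _ h ω => stoppedSum_mono_left f ω h

lemma measurable_Rop (hst : IsPathStoppingTime τ) (hf : Measurable f) :
    Measurable (Rop M τ f) := by
  simp_rw [funext (Rop_eq_iSup_RopTrunc M hst hf)]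
  exact .iSup (measurable_RopTrunc M hst hf)

lemma Rop_mono : Monotone (Rop M τ) := fun _ _ h _ =>
  lintegral_mono fun _ => Finset.sum_le_sum fun _ _ => h _

lemma Rop_iSup (hst : IsPathStoppingTime τ) {f : ℕ → X → ℝ≥0∞} (hf : ∀ n, Measurable (f n))
    (hmono : Monotone f) (x : X) :
    Rop M τ (fun y => ⨆ n, f n y) x = ⨆ n, Rop M τ (f n) x := by
  have hRN : ∀ N, RopTrunc M τ N (fun y => ⨆ n, f n y) x = ⨆ n, RopTrunc M τ N (f n) x :=
    fun N => by
      simp_rw [RopTrunc, stoppedSum_iSup hmono]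
      exact lintegral_iSup (fun n => measurable_stoppedSum hst.measurable (hf n) N)
        fun _ _ h ω => stoppedSum_mono_right N (hmono h) ω
  simp_rw [Rop_eq_iSup_RopTrunc M hst (Measurable.iSup hf), Rop_eq_iSup_RopTrunc M hst (hf _), hRN]
  exact iSup_comm

lemma lintegral_Sop_Rop_iSup (hst : IsPathStoppingTime τ) {f : ℕ → X → ℝ≥0∞}
    (hf : ∀ n, Measurable (f n)) (hmono : Monotone f) (μ : Measure X) :
    ∫⁻ x, Sop M τ (Rop M τ fun y => ⨆ n, f n y) x ∂μ = ⨆ n, ∫⁻ x, Sop M τ (Rop M τ (f n)) x ∂μ := by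
  have hRmono : Monotone fun n => Rop M τ (f n) := fun _ _ h => Rop_mono M (hmono h)
  rw [funext (Rop_iSup M hst hf hmono)]
  simp_rw [Sop_iSup M (fun n => measurable_Rop M hst (hf n)) hRmono]
  exact lintegral_iSup (fun n => measurable_Sop M hst (measurable_Rop M hst (hf n)))
    fun _ _ h => Sop_mono M (hRmono h)

end RopTrunc

section Kac

variable (M : MarkovChain X) {τ : (ℕ → X) → ℕ∞} {f : X → ℝ≥0∞}

lemma lintegral_Sop_RopTrunc_add_eq (hst : IsPathStoppingTime τ) (hθ : ThetaCompatible M τ)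
    {μ : Measure X} [IsFiniteMeasure μ] (hinv : PInvariant M μ)
    (hfin : ∀ᵐ x ∂μ, M.law x {ω | τ ω ≠ ⊤} = 1) (hf : Measurable f) {C : ℝ≥0∞} (hC : C ≠ ⊤)
    (hfC : ∀ y, f y ≤ C) (N : ℕ) :
    ∫⁻ x, Sop M τ (RopTrunc M τ N f) x ∂μ
      + ∫⁻ x, ∫⁻ ω, (τ ⁻¹' Ioo (N : ℕ∞) ⊤).indicator (fun ω => f (ω N)) ω ∂M.law x ∂μ
      = ∫⁻ x, f x ∂μ := by
  set t := ∫⁻ x, ∫⁻ ω in {ω | 2 ≤ τ ω}, RopTrunc M τ N f (ω 1) ∂M.law x ∂μ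
  have hNC : (N : ℝ≥0∞) * C ≠ ⊤ := ENNReal.mul_ne_top (ENNReal.natCast_ne_top N) hC
  have hmeas := measurable_RopTrunc M hst hf N
  have hrec : ∫⁻ x, RopTrunc M τ (N + 1) f x ∂μ = ∫⁻ x, f x ∂μ + t := by
    simp_rw [RopTrunc_succ_eq_shift M hst hθ hf N]
    rw [lintegral_add_left (f := fun x => f x * M.law x {ω | τ ω ≠ ⊤})
      (hf.mul ((Measure.measurable_coe (hst.measurableSet_preimage {⊤}ᶜ)).comp M.meas_law)),
      lintegral_congr_ae (hfin.mono fun x hx => by rw [hx, mul_one])]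
  have hinvN : ∫⁻ x, RopTrunc M τ N f x ∂μ = ∫⁻ x, Sop M τ (RopTrunc M τ N f) x ∂μ + t := by
    rw [← hinv _ hmeas ⟨_, hNC, RopTrunc_le M hfC N⟩]
    simp_rw [Pop_eq_Sop_add M hst (hθ.1 _)]
    exact lintegral_add_left (measurable_Sop M hst hmeas) _
  have hfinite : ∫⁻ x, RopTrunc M τ N f x ∂μ ≠ ⊤ :=
    ne_top_of_le_ne_top (lintegral_const_lt_top hNC).ne (lintegral_mono (RopTrunc_le M hfC N))
  have ht : t ≠ ⊤ := ne_top_of_le_ne_top hfinite (hinvN ▸ le_add_self)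
  refine (ENNReal.add_left_inj ht).1 ?_
  rw [← hrec, funext (RopTrunc_succ M hst hf N), lintegral_add_left hmeas, hinvN, add_right_comm]

lemma lintegral_eq_lintegral_Sop_Rop_of_bounded (hst : IsPathStoppingTime τ)
    (hθ : ThetaCompatible M τ) {μ : Measure X} [IsFiniteMeasure μ] (hinv : PInvariant M μ)
    (htail : ∀ᵐ x ∂μ, Tendsto (fun n : ℕ => M.law x {ω | (n : ℕ∞) ≤ τ ω}) atTop (𝓝 0))
    (hf : Measurable f) {C : ℝ≥0∞} (hC : C ≠ ⊤) (hfC : ∀ y, f y ≤ C) :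
    ∫⁻ x, f x ∂μ = ∫⁻ x, Sop M τ (Rop M τ f) x ∂μ := by
  set d : ℕ → ℝ≥0∞ := fun N =>
    ∫⁻ x, ∫⁻ ω, (τ ⁻¹' Ioo (N : ℕ∞) ⊤).indicator (fun ω => f (ω N)) ω ∂M.law x ∂μ
  have hsum := lintegral_Sop_RopTrunc_add_eq M hst hθ hinv
    (htail.mono fun x hx => M.law_ne_top_eq_one hst hx) hf hC hfC
  have hd : Tendsto d atTop (𝓝 0) := by
    have hbound := ENNReal.Tendsto.const_mul (M.tendsto_lintegral_law_le hst htail) (Or.inr hC)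
    rw [mul_zero] at hbound
    refine tendsto_of_tendsto_of_tendsto_of_le_of_le tendsto_const_nhds hbound (fun _ => zero_le)
      fun N => ?_
    rw [← lintegral_const_mul' _ _ hC]
    refine lintegral_mono fun x => ?_
    rw [← lintegral_indicator_const (s := {ω | (N : ℕ∞) ≤ τ ω})
      (hst.measurableSet_preimage (Ici N))]
    have hsub : τ ⁻¹' Ioo (N : ℕ∞) ⊤ ⊆ {ω | (N : ℕ∞) ≤ τ ω} := fun ω hω => le_of_lt hω.1
    exact lintegral_mono fun ω => (indicator_le_indicator (hfC _)).trans
      (indicator_le_indicator_of_subset hsub (fun _ => zero_le) ω)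
  have hS : Tendsto (fun N => ∫⁻ x, Sop M τ (RopTrunc M τ N f) x ∂μ) atTop
      (𝓝 (∫⁻ x, Sop M τ (Rop M τ f) x ∂μ)) := by
    have hmono : Monotone fun N => RopTrunc M τ N f := fun _ _ h x => RopTrunc_mono_left M f x h
    rw [funext (Rop_eq_iSup_RopTrunc M hst hf)]
    simp_rw [Sop_iSup M (measurable_RopTrunc M hst hf) hmono]
    rw [lintegral_iSup (fun N => measurable_Sop M hst (measurable_RopTrunc M hst hf N))
      fun _ _ h => Sop_mono M (hmono h)]
    exact tendsto_atTop_iSup fun _ _ h => lintegral_mono (Sop_mono M (hmono h))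
  have hlim := hS.add hd
  rw [add_zero] at hlim
  exact tendsto_nhds_unique (tendsto_const_nhds.congr fun N => (hsum N).symm) hlim

end Kac

theorem stmt1_general (M : MarkovChain X) (τ : (ℕ → X) → ℕ∞)
    (hst : IsPathStoppingTime τ) (hθ : ThetaCompatible M τ)
    (μ : Measure X) [IsFiniteMeasure μ] (hinv : PInvariant M μ)
    (htail : ∀ᵐ x ∂μ, Tendsto (fun n : ℕ => M.law x {ω | (n : ℕ∞) ≤ τ ω}) atTop (𝓝 0))
    (f : X → ℝ≥0∞) (hf : Measurable f) :
    ∫⁻ x, f x ∂μ = ∫⁻ x, Sop M τ (Rop M τ f) x ∂μ := by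
  set g : ℕ → X → ℝ≥0∞ := fun n x => min (f x) n
  have hg : ∀ n, Measurable (g n) := fun n => hf.min measurable_const
  have hmono : Monotone g := fun _ _ h x => min_le_min_left _ (Nat.cast_le.2 h)
  have hsup : (fun x => ⨆ n, g n x) = f := funext fun x => by
    simp only [g, ← inf_iSup_eq, ENNReal.iSup_natCast, inf_top_eq]
  calc ∫⁻ x, f x ∂μ = ⨆ n, ∫⁻ x, g n x ∂μ := by rw [← lintegral_iSup hg hmono, hsup]
    _ = ⨆ n, ∫⁻ x, Sop M τ (Rop M τ (g n)) x ∂μ := iSup_congr fun n =>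
        lintegral_eq_lintegral_Sop_Rop_of_bounded M hst hθ hinv htail (hg n)
          (ENNReal.natCast_ne_top n) fun _ => min_le_right _ _
    _ = ∫⁻ x, Sop M τ (Rop M τ f) x ∂μ := by rw [← lintegral_Sop_Rop_iSup M hst hg hmono, hsup]

/-- Lemma 1.6 (generalized Kac lemma): if `μ` is a finite `P`-invariant measure and `τ` a
θ-compatible stopping time with `ℙ_x(τ ≥ n) → 0` for `μ`-a.e. `x`, then
`∫ f dμ = ∫ SRf dμ` for every nonnegative borelian `f`. -/
theorem stmt1 [MetricSpace X] [CompleteSpace X] [TopologicalSpace.SeparableSpace X] [BorelSpace X]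
    (M : MarkovChain X) (τ : (ℕ → X) → ℕ∞)
    (hst : IsPathStoppingTime τ) (hθ : ThetaCompatible M τ)
    (μ : Measure X) [IsFiniteMeasure μ] (hinv : PInvariant M μ)
    (htail : ∀ᵐ x ∂μ, Tendsto (fun n : ℕ => M.law x {ω | (n : ℕ∞) ≤ τ ω}) atTop (𝓝 0))
    (f : X → ℝ≥0∞) (hf : Measurable f) :
    ∫⁻ x, f x ∂μ = ∫⁻ x, Sop M τ (Rop M τ f) x ∂μ :=
  stmt1_general M τ hst hθ μ hinv htail f hf
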